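/- arXiv:1206.6919 — 2 statements merged into one kernel-verified Lean document; each statement's English description precedes it below -/
import Mathlib

section
/- If ψ(t, λ, μ) is a smooth solution of the barotropic vorticity equation ζ_t + ψ_λ ζ_μ − ψ_μ ζ_λ = 0 (with ζ = ψ_{λλ}/(1−μ²) + ((1−μ²)ψ_μ)_μ), then for any nonzero real constants a₁ and any real a₀, ε ∈ {1, −1}, and any smooth function f of t, the function ψ̃(t̃, λ, μ̃) defined by ψ̃(a₁ t + a₀, λ, ε μ) = (ε/a₁) ψ(t, λ, μ) + f(t) is again a solution. -/
/-- Partial derivative in the time variable t. -/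
noncomputable def pT (ψ : ℝ → ℝ → ℝ → ℝ) : ℝ → ℝ → ℝ → ℝ :=
  fun t l m => deriv (fun s => ψ s l m) t

/-- Partial derivative in the longitude variable λ. -/
noncomputable def pL (ψ : ℝ → ℝ → ℝ → ℝ) : ℝ → ℝ → ℝ → ℝ :=
  fun t l m => deriv (fun s => ψ t s m) l

/-- Partial derivative in the latitude variable μ. -/
noncomputable def pM (ψ : ℝ → ℝ → ℝ → ℝ) : ℝ → ℝ → ℝ → ℝ :=
  fun t l m => deriv (fun s => ψ t l s) m

/-- The spherical Laplacian ζ = ψ_{λλ}/(1−μ²) + ((1−μ²)ψ_μ)_μ of the stream function. -/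
noncomputable def vort (ψ : ℝ → ℝ → ℝ → ℝ) : ℝ → ℝ → ℝ → ℝ :=
  fun t l m =>
    pL (pL ψ) t l m / (1 - m ^ 2)
      + pM (fun t' l' m' => (1 - m' ^ 2) * pM ψ t' l' m') t l m

/-- ψ solves the barotropic vorticity equation on the sphere rotating with angular
velocity Ω: ζ_t + ψ_λ ζ_μ − ψ_μ ζ_λ + 2Ω ψ_λ = 0 for μ ∈ (−1, 1). -/
def isVortSol (Ω : ℝ) (ψ : ℝ → ℝ → ℝ → ℝ) : Prop :=
  ∀ t l : ℝ, ∀ m ∈ Set.Ioo (-1 : ℝ) 1,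
    pT (vort ψ) t l m + pL ψ t l m * pM (vort ψ) t l m
      - pM ψ t l m * pL (vort ψ) t l m + 2 * Ω * pL ψ t l m = 0

/-- Smoothness of ψ on the domain μ ∈ (−1, 1). -/
def isSmoothStream (ψ : ℝ → ℝ → ℝ → ℝ) : Prop :=
  ContDiffOn ℝ (⊤ : ℕ∞) (fun p : ℝ × ℝ × ℝ => ψ p.1 p.2.1 p.2.2)
    {p : ℝ × ℝ × ℝ | p.2.2 ∈ Set.Ioo (-1 : ℝ) 1}

open Set Filter Topology ContDiff

def symU : Set (ℝ × ℝ × ℝ) := {p : ℝ × ℝ × ℝ | p.2.2 ∈ Set.Ioo (-1 : ℝ) 1}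

def uncψ (F : ℝ → ℝ → ℝ → ℝ) : ℝ × ℝ × ℝ → ℝ := fun p => F p.1 p.2.1 p.2.2

lemma symU_open : IsOpen symU :=
  isOpen_Ioo.preimage (continuous_snd.comp continuous_snd)

lemma sliceT {F : ℝ → ℝ → ℝ → ℝ} (hF : ContDiffOn ℝ ∞ (uncψ F) symU)
    (t l : ℝ) {m : ℝ} (hm : m ∈ Set.Ioo (-1:ℝ) 1) :
    HasDerivAt (fun s => F s l m) (pT F t l m) t := by
  have hd : DifferentiableAt ℝ (uncψ F) (t, l, m) :=
    (hF.differentiableOn (by simp)).differentiableAt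
      (symU_open.mem_nhds hm)
  have hj : HasDerivAt (fun s : ℝ => ((s, l, m) : ℝ × ℝ × ℝ)) (1, 0, 0) t :=
    (hasDerivAt_id t).prodMk ((hasDerivAt_const t l).prodMk (hasDerivAt_const t m))
  have h1 : HasDerivAt (fun s => F s l m)
      (fderiv ℝ (uncψ F) (t, l, m) (1, 0, 0)) t :=
    by have := hd.hasFDerivAt.comp_hasDerivAt t hj; exact this
  have h2 : pT F t l m = fderiv ℝ (uncψ F) (t, l, m) (1, 0, 0) := h1.deriv
  rw [pT] at h2 ⊢
  rw [h2]; exact h1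

lemma sliceL {F : ℝ → ℝ → ℝ → ℝ} (hF : ContDiffOn ℝ ∞ (uncψ F) symU)
    (t l : ℝ) {m : ℝ} (hm : m ∈ Set.Ioo (-1:ℝ) 1) :
    HasDerivAt (fun s => F t s m) (pL F t l m) l := by
  have hd : DifferentiableAt ℝ (uncψ F) (t, l, m) :=
    (hF.differentiableOn (by simp)).differentiableAt
      (symU_open.mem_nhds hm)
  have hj : HasDerivAt (fun s : ℝ => ((t, s, m) : ℝ × ℝ × ℝ)) (0, 1, 0) l :=
    (hasDerivAt_const l t).prodMk ((hasDerivAt_id l).prodMk (hasDerivAt_const l m))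
  have h1 : HasDerivAt (fun s => F t s m)
      (fderiv ℝ (uncψ F) (t, l, m) (0, 1, 0)) l :=
    by have := hd.hasFDerivAt.comp_hasDerivAt l hj; exact this
  have h2 : pL F t l m = fderiv ℝ (uncψ F) (t, l, m) (0, 1, 0) := h1.deriv
  rw [pL] at h2 ⊢
  rw [h2]; exact h1

lemma sliceM {F : ℝ → ℝ → ℝ → ℝ} (hF : ContDiffOn ℝ ∞ (uncψ F) symU)
    (t l : ℝ) {m : ℝ} (hm : m ∈ Set.Ioo (-1:ℝ) 1) :
    HasDerivAt (fun s => F t l s) (pM F t l m) m := by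
  have hd : DifferentiableAt ℝ (uncψ F) (t, l, m) :=
    (hF.differentiableOn (by simp)).differentiableAt
      (symU_open.mem_nhds hm)
  have hj : HasDerivAt (fun s : ℝ => ((t, l, s) : ℝ × ℝ × ℝ)) (0, 0, 1) m :=
    (hasDerivAt_const m t).prodMk ((hasDerivAt_const m l).prodMk (hasDerivAt_id m))
  have h1 : HasDerivAt (fun s => F t l s)
      (fderiv ℝ (uncψ F) (t, l, m) (0, 0, 1)) m :=
    by have := hd.hasFDerivAt.comp_hasDerivAt m hj; exact this
  have h2 : pM F t l m = fderiv ℝ (uncψ F) (t, l, m) (0, 0, 1) := h1.deriv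
  rw [pM] at h2 ⊢
  rw [h2]; exact h1

lemma smooth_fderiv_apply {F : ℝ → ℝ → ℝ → ℝ} (hF : ContDiffOn ℝ ∞ (uncψ F) symU)
    (v : ℝ × ℝ × ℝ) : ContDiffOn ℝ ∞ (fun p => fderiv ℝ (uncψ F) p v) symU :=
  (hF.fderiv_of_isOpen symU_open (le_of_eq rfl)).clm_apply contDiffOn_const

lemma smooth_pT {F : ℝ → ℝ → ℝ → ℝ} (hF : ContDiffOn ℝ ∞ (uncψ F) symU) :
    ContDiffOn ℝ ∞ (uncψ (pT F)) symU := by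
  refine (smooth_fderiv_apply hF (1, 0, 0)).congr ?_
  rintro ⟨t, l, m⟩ hp
  have hd : DifferentiableAt ℝ (uncψ F) (t, l, m) :=
    (hF.differentiableOn (by simp)).differentiableAt
      (symU_open.mem_nhds hp)
  have hj : HasDerivAt (fun s : ℝ => ((s, l, m) : ℝ × ℝ × ℝ)) (1, 0, 0) t :=
    (hasDerivAt_id t).prodMk ((hasDerivAt_const t l).prodMk (hasDerivAt_const t m))
  exact (hd.hasFDerivAt.comp_hasDerivAt t hj).deriv

lemma smooth_pL {F : ℝ → ℝ → ℝ → ℝ} (hF : ContDiffOn ℝ ∞ (uncψ F) symU) :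
    ContDiffOn ℝ ∞ (uncψ (pL F)) symU := by
  refine (smooth_fderiv_apply hF (0, 1, 0)).congr ?_
  rintro ⟨t, l, m⟩ hp
  have hd : DifferentiableAt ℝ (uncψ F) (t, l, m) :=
    (hF.differentiableOn (by simp)).differentiableAt
      (symU_open.mem_nhds hp)
  have hj : HasDerivAt (fun s : ℝ => ((t, s, m) : ℝ × ℝ × ℝ)) (0, 1, 0) l :=
    (hasDerivAt_const l t).prodMk ((hasDerivAt_id l).prodMk (hasDerivAt_const l m))
  exact (hd.hasFDerivAt.comp_hasDerivAt l hj).deriv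

lemma smooth_pM {F : ℝ → ℝ → ℝ → ℝ} (hF : ContDiffOn ℝ ∞ (uncψ F) symU) :
    ContDiffOn ℝ ∞ (uncψ (pM F)) symU := by
  refine (smooth_fderiv_apply hF (0, 0, 1)).congr ?_
  rintro ⟨t, l, m⟩ hp
  have hd : DifferentiableAt ℝ (uncψ F) (t, l, m) :=
    (hF.differentiableOn (by simp)).differentiableAt
      (symU_open.mem_nhds hp)
  have hj : HasDerivAt (fun s : ℝ => ((t, l, s) : ℝ × ℝ × ℝ)) (0, 0, 1) m :=
    (hasDerivAt_const m t).prodMk ((hasDerivAt_const m l).prodMk (hasDerivAt_id m))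
  exact (hd.hasFDerivAt.comp_hasDerivAt m hj).deriv

lemma smooth_mulM {F : ℝ → ℝ → ℝ → ℝ} (hF : ContDiffOn ℝ ∞ (uncψ F) symU) :
    ContDiffOn ℝ ∞ (uncψ (fun t l m => (1 - m ^ 2) * pM F t l m)) symU := by
  have : uncψ (fun t l m => (1 - m ^ 2) * pM F t l m)
      = fun p : ℝ × ℝ × ℝ => (1 - p.2.2 ^ 2) * uncψ (pM F) p := rfl
  rw [this]
  exact (ContDiff.contDiffOn (by fun_prop)).mul (smooth_pM hF)

lemma smooth_vort {F : ℝ → ℝ → ℝ → ℝ} (hF : ContDiffOn ℝ ∞ (uncψ F) symU) :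
    ContDiffOn ℝ ∞ (uncψ (vort F)) symU := by
  have hLL := smooth_pL (smooth_pL hF)
  have hMh := smooth_pM (smooth_mulM hF)
  have hrw : uncψ (vort F) = fun p : ℝ × ℝ × ℝ =>
      uncψ (pL (pL F)) p / (1 - p.2.2 ^ 2)
        + uncψ (pM (fun t' l' m' => (1 - m' ^ 2) * pM F t' l' m')) p := rfl
  rw [hrw]
  refine (hLL.div (ContDiff.contDiffOn (by fun_prop)) ?_).add hMh
  rintro ⟨t, l, m⟩ hp
  have h1 : (-1 : ℝ) < m := hp.1
  have h2 : m < 1 := hp.2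
  simp only []
  nlinarith

/-- The general point symmetry t̃ = a₁t + a₀, λ̃ = λ, μ̃ = εμ, ψ̃ = (ε/a₁)ψ + f(t)
maps solutions of the non-rotating spherical vorticity equation to solutions. -/
theorem stmt14 (ψ : ℝ → ℝ → ℝ → ℝ)
    (hψ : isSmoothStream ψ) (hsol : isVortSol 0 ψ)
    (a₁ a₀ ε : ℝ) (ha₁ : a₁ ≠ 0) (hε : ε = 1 ∨ ε = -1)
    (f : ℝ → ℝ) (hf : ContDiff ℝ (⊤ : ℕ∞) f)
    (ψt : ℝ → ℝ → ℝ → ℝ)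
    (hψt : ∀ t l m : ℝ, ψt (a₁ * t + a₀) l (ε * m) = ε / a₁ * ψ t l m + f t) :
    isVortSol 0 ψt := by
  have hε2 : ε * ε = 1 := by rcases hε with h | h <;> simp [h]
  have hψ' : ContDiffOn ℝ ∞ (uncψ ψ) symU := hψ.of_le (by simp)
  have hm' : ∀ {m : ℝ}, m ∈ Set.Ioo (-1:ℝ) 1 → ε * m ∈ Set.Ioo (-1:ℝ) 1 := by
    intro m hm
    have h1 := hm.1; have h2 := hm.2
    rcases hε with h | h <;> subst h <;> constructor <;> linarith
  -- explicit formula for ψt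
  have hform : ∀ s l m : ℝ,
      ψt s l m = ε / a₁ * ψ ((s - a₀) / a₁) l (ε * m) + f ((s - a₀) / a₁) := by
    intro s l m
    have h := hψt ((s - a₀) / a₁) l (ε * m)
    rw [show a₁ * ((s - a₀) / a₁) + a₀ = s by field_simp; ring,
      show ε * (ε * m) = m by rw [← mul_assoc, hε2, one_mul]] at h
    exact h
  -- pL of ψt
  have hpL : ∀ t l m : ℝ,
      pL ψt t l m = ε / a₁ * pL ψ ((t - a₀) / a₁) l (ε * m) := by
    intro t l m
    show deriv (fun s => ψt t s m) l = _
    rw [show (fun s => ψt t s m)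
        = fun s => ε / a₁ * ψ ((t - a₀) / a₁) s (ε * m) + f ((t - a₀) / a₁)
        from funext fun s => hform t s m, deriv_add_const, deriv_const_mul_field]
    rfl
  -- pL pL of ψt
  have hpLL : ∀ t l m : ℝ,
      pL (pL ψt) t l m = ε / a₁ * pL (pL ψ) ((t - a₀) / a₁) l (ε * m) := by
    intro t l m
    show deriv (fun s => pL ψt t s m) l = _
    rw [show (fun s => pL ψt t s m)
        = fun s => ε / a₁ * pL ψ ((t - a₀) / a₁) s (ε * m)
        from funext fun s => hpL t s m, deriv_const_mul_field]
    rfl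
  -- pM of ψt on the domain
  have hpM : ∀ t l : ℝ, ∀ m ∈ Set.Ioo (-1:ℝ) 1,
      pM ψt t l m = ε / a₁ * (pM ψ ((t - a₀) / a₁) l (ε * m) * ε) := by
    intro t l m hm
    show deriv (fun s => ψt t l s) m = _
    rw [show (fun s => ψt t l s)
        = fun s => ε / a₁ * ψ ((t - a₀) / a₁) l (ε * s) + f ((t - a₀) / a₁)
        from funext fun s => hform t l s, deriv_add_const, deriv_const_mul_field]
    congr 1
    have hs : HasDerivAt (fun s : ℝ => ε * s) ε m := by
      simpa using (hasDerivAt_id m).const_mul ε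
    have hg := sliceM hψ' ((t - a₀) / a₁) l (hm' hm)
    exact (HasDerivAt.comp (x := m) hg hs).deriv
  -- vort of ψt on the domain
  have hvt : ∀ t l : ℝ, ∀ m ∈ Set.Ioo (-1:ℝ) 1,
      vort ψt t l m = ε / a₁ * vort ψ ((t - a₀) / a₁) l (ε * m) := by
    intro t l m hm
    have hsq : ∀ s : ℝ, (ε * s) ^ 2 = s ^ 2 := by
      intro s; rw [mul_pow, sq, hε2, one_mul]
    have key2 : pM (fun t' l' m' => (1 - m' ^ 2) * pM ψt t' l' m') t l m
        = ε / a₁ * pM (fun t' l' m' => (1 - m' ^ 2) * pM ψ t' l' m')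
            ((t - a₀) / a₁) l (ε * m) := by
      show deriv (fun s => (1 - s ^ 2) * pM ψt t l s) m = _
      have hev : (fun s => (1 - s ^ 2) * pM ψt t l s)
          =ᶠ[nhds m] fun s => (1 / a₁) *
            ((1 - (ε * s) ^ 2) * pM ψ ((t - a₀) / a₁) l (ε * s)) := by
        filter_upwards [Ioo_mem_nhds hm.1 hm.2] with s hs
        rw [hpM t l s hs, hsq s]
        linear_combination ((1 - s ^ 2) * pM ψ ((t - a₀) / a₁) l (ε * s) / a₁) * hε2
      rw [hev.deriv_eq, deriv_const_mul_field]
      have hs : HasDerivAt (fun s : ℝ => ε * s) ε m := by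
        simpa using (hasDerivAt_id m).const_mul ε
      have hg := sliceM (smooth_mulM hψ') ((t - a₀) / a₁) l (hm' hm)
      have hc : deriv (fun s => (1 - (ε * s) ^ 2) * pM ψ ((t - a₀) / a₁) l (ε * s)) m
          = pM (fun t' l' m' => (1 - m' ^ 2) * pM ψ t' l' m') ((t - a₀) / a₁) l (ε * m) * ε :=
        (HasDerivAt.comp (x := m) hg hs).deriv
      rw [hc]
      ring
    show pL (pL ψt) t l m / (1 - m ^ 2)
        + pM (fun t' l' m' => (1 - m' ^ 2) * pM ψt t' l' m') t l m = _
    rw [hpLL t l m, key2]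
    show _ = ε / a₁ * (pL (pL ψ) ((t - a₀) / a₁) l (ε * m) / (1 - (ε * m) ^ 2)
        + pM (fun t' l' m' => (1 - m' ^ 2) * pM ψ t' l' m') ((t - a₀) / a₁) l (ε * m))
    rw [hsq m]
    ring
  -- now the main computation
  intro t l m hm
  have hsmv : ContDiffOn ℝ ∞ (uncψ (vort ψ)) symU := smooth_vort hψ'
  have e1 : pT (vort ψt) t l m
      = ε / a₁ * (pT (vort ψ) ((t - a₀) / a₁) l (ε * m) * (1 / a₁)) := by
    show deriv (fun s => vort ψt s l m) t = _
    rw [show (fun s => vort ψt s l m)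
        = fun s => ε / a₁ * vort ψ ((s - a₀) / a₁) l (ε * m)
        from funext fun s => hvt s l m hm, deriv_const_mul_field]
    congr 1
    have hj : HasDerivAt (fun s : ℝ => (s - a₀) / a₁) (1 / a₁) t := by
      simpa using ((hasDerivAt_id t).sub_const a₀).div_const a₁
    have hg := sliceT hsmv ((t - a₀) / a₁) l (hm' hm)
    exact (HasDerivAt.comp (x := t) hg hj).deriv
  have e2 : pL (vort ψt) t l m = ε / a₁ * pL (vort ψ) ((t - a₀) / a₁) l (ε * m) := by
    show deriv (fun s => vort ψt t s m) l = _
    rw [show (fun s => vort ψt t s m)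
        = fun s => ε / a₁ * vort ψ ((t - a₀) / a₁) s (ε * m)
        from funext fun s => hvt t s m hm, deriv_const_mul_field]
    rfl
  have e3 : pM (vort ψt) t l m
      = ε / a₁ * (pM (vort ψ) ((t - a₀) / a₁) l (ε * m) * ε) := by
    show deriv (fun s => vort ψt t l s) m = _
    have hev : (fun s => vort ψt t l s)
        =ᶠ[nhds m] fun s => ε / a₁ * vort ψ ((t - a₀) / a₁) l (ε * s) := by
      filter_upwards [Ioo_mem_nhds hm.1 hm.2] with s hs
      exact hvt t l s hs
    rw [hev.deriv_eq, deriv_const_mul_field]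
    congr 1
    have hs : HasDerivAt (fun s : ℝ => ε * s) ε m := by
      simpa using (hasDerivAt_id m).const_mul ε
    have hg := sliceM hsmv ((t - a₀) / a₁) l (hm' hm)
    exact (HasDerivAt.comp (x := m) hg hs).deriv
  have H := hsol ((t - a₀) / a₁) l (ε * m) (hm' hm)
  rw [e1, e2, e3, hpL t l m, hpM t l m hm]
  rcases hε with h | h <;> subst h
  · linear_combination (1 / a₁ ^ 2) * H
  · linear_combination (-1 / a₁ ^ 2) * H
end

section
/- Suppose smooth functions Λ(λ, μ) and M(μ) on ℝ × (−1,1), with M' never zero and |M| < 1, satisfy: Λ_λ = 1, M_λ = 0, √(1−μ²) M' = √(1−M²) cos(Λ − λ) and √(1−M²) sin(Λ − λ) = 0, together with μ/√(1−μ²) = ± M/√(1−M²) (sign (−1)^k matching cos(Λ−λ) = (−1)^k). Then Λ = λ + πk for some integer k and M(μ) = (−1)^k μ. -/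
lemma ratio_inj18 {a b : ℝ} (ha : a ∈ Set.Ioo (-1 : ℝ) 1) (hb : b ∈ Set.Ioo (-1 : ℝ) 1)
    (h : a / Real.sqrt (1 - a ^ 2) = b / Real.sqrt (1 - b ^ 2)) : a = b := by
  have ha2 : (0:ℝ) < 1 - a ^ 2 := by nlinarith [ha.1, ha.2]
  have hb2 : (0:ℝ) < 1 - b ^ 2 := by nlinarith [hb.1, hb.2]
  have hsa : 0 < Real.sqrt (1 - a ^ 2) := Real.sqrt_pos.2 ha2
  have hsb : 0 < Real.sqrt (1 - b ^ 2) := Real.sqrt_pos.2 hb2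
  have hcross : a * Real.sqrt (1 - b ^ 2) = b * Real.sqrt (1 - a ^ 2) :=
    (div_eq_div_iff hsa.ne' hsb.ne').1 h
  have hsq : a ^ 2 * (1 - b ^ 2) = b ^ 2 * (1 - a ^ 2) := by
    have := congrArg (fun x => x ^ 2) hcross
    simpa [mul_pow, Real.sq_sqrt ha2.le, Real.sq_sqrt hb2.le] using this
  have hab : a ^ 2 = b ^ 2 := by nlinarith
  have hss : Real.sqrt (1 - a ^ 2) = Real.sqrt (1 - b ^ 2) := by rw [hab]
  rw [hss] at hcross
  exact mul_right_cancel₀ hsb.ne' hcross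

/-- The determining equations for the angular components of a point symmetry of the
spherical vorticity equation force Λ = λ + πk and M = (−1)ᵏ μ. -/
theorem stmt18 (Λ : ℝ → ℝ → ℝ) (M : ℝ → ℝ)
    (hΛ : ContDiffOn ℝ (⊤ : ℕ∞) (fun p : ℝ × ℝ => Λ p.1 p.2)
      {p : ℝ × ℝ | p.2 ∈ Set.Ioo (-1 : ℝ) 1})
    (hM : ContDiffOn ℝ (⊤ : ℕ∞) M (Set.Ioo (-1) 1))
    (hM' : ∀ m ∈ Set.Ioo (-1 : ℝ) 1, deriv M m ≠ 0)
    (hMlt : ∀ m ∈ Set.Ioo (-1 : ℝ) 1, |M m| < 1)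
    (hLamLam : ∀ l : ℝ, ∀ m ∈ Set.Ioo (-1 : ℝ) 1, deriv (fun s => Λ s m) l = 1)
    (heq1 : ∀ l : ℝ, ∀ m ∈ Set.Ioo (-1 : ℝ) 1,
      Real.sqrt (1 - m ^ 2) * deriv M m
        = Real.sqrt (1 - M m ^ 2) * Real.cos (Λ l m - l))
    (heq2 : ∀ l : ℝ, ∀ m ∈ Set.Ioo (-1 : ℝ) 1,
      Real.sqrt (1 - M m ^ 2) * Real.sin (Λ l m - l) = 0)
    (heq3 : ∀ l : ℝ, ∀ m ∈ Set.Ioo (-1 : ℝ) 1,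
      m / Real.sqrt (1 - m ^ 2)
        = Real.cos (Λ l m - l) * (M m / Real.sqrt (1 - M m ^ 2))) :
    ∃ k : ℤ, (∀ l : ℝ, ∀ m ∈ Set.Ioo (-1 : ℝ) 1, Λ l m = l + Real.pi * k) ∧
      (∀ m ∈ Set.Ioo (-1 : ℝ) 1, M m = (-1) ^ k * m) := by
  have hsqM : ∀ m ∈ Set.Ioo (-1 : ℝ) 1, 0 < Real.sqrt (1 - M m ^ 2) := by
    intro m hm
    have h := abs_lt.1 (hMlt m hm)
    exact Real.sqrt_pos.2 (by nlinarith [h.1, h.2])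
  have hsin : ∀ l : ℝ, ∀ m ∈ Set.Ioo (-1 : ℝ) 1, Real.sin (Λ l m - l) = 0 := by
    intro l m hm
    exact (mul_eq_zero.1 (heq2 l m hm)).resolve_left (hsqM m hm).ne'
  set S : Set (ℝ × ℝ) := {p : ℝ × ℝ | p.2 ∈ Set.Ioo (-1 : ℝ) 1} with hSdef
  have hSeq : S = Set.univ ×ˢ Set.Ioo (-1 : ℝ) 1 := by
    ext p; simp [hSdef, Set.mem_prod]
  have hSpre : IsPreconnected S := by
    rw [hSeq]; exact (convex_univ.prod (convex_Ioo _ _)).isPreconnected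
  set f : ℝ × ℝ → ℝ := fun p => (Λ p.1 p.2 - p.1) / Real.pi with hfdef
  have hfc : ContinuousOn f S := (hΛ.continuousOn.sub continuousOn_fst).div_const _
  have hfint : ∀ p ∈ S, ∃ n : ℤ, f p = n := by
    intro p hp
    obtain ⟨n, hn⟩ := Real.sin_eq_zero_iff.1 (hsin p.1 p.2 hp)
    refine ⟨n, ?_⟩
    simp only [hfdef]; rw [div_eq_iff Real.pi_ne_zero]
    linarith [hn]
  have h0 : ((0, 0) : ℝ × ℝ) ∈ S := by
    simp only [hSdef, Set.mem_setOf_eq, Set.mem_Ioo]; norm_num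
  obtain ⟨k, hk⟩ := hfint _ h0
  have hconst : ∀ p ∈ S, f p = k := by
    intro p hp
    obtain ⟨n, hn⟩ := hfint p hp
    rw [hn]
    by_contra hne
    have hnk : n ≠ k := fun h => hne (by rw [h])
    have key : ∀ c : ℝ, (∃ x ∈ S, f x = c) → ∃ j : ℤ, (j : ℝ) = c := by
      rintro c ⟨x, hx, hxc⟩
      obtain ⟨j, hj⟩ := hfint x hx
      exact ⟨j, by rw [← hj, hxc]⟩
    rcases hnk.lt_or_gt with h | h
    · have hle : (n : ℝ) + 1 ≤ (k : ℝ) := by exact_mod_cast h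
      obtain ⟨j, hj⟩ := key ((n : ℝ) + 1/2)
        (hSpre.intermediate_value₂ hp h0 hfc continuousOn_const
          (by rw [hn]; linarith) (by rw [hk]; linarith))
      have : (2 * j : ℤ) = 2 * n + 1 := by
        have : ((2 * j : ℤ) : ℝ) = ((2 * n + 1 : ℤ) : ℝ) := by push_cast; linarith
        exact_mod_cast this
      omega
    · have hle : (k : ℝ) + 1 ≤ (n : ℝ) := by exact_mod_cast h
      obtain ⟨j, hj⟩ := key ((k : ℝ) + 1/2)
        (hSpre.intermediate_value₂ h0 hp hfc continuousOn_const
          (by rw [hk]; linarith) (by rw [hn]; linarith))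
      have : (2 * j : ℤ) = 2 * k + 1 := by
        have : ((2 * j : ℤ) : ℝ) = ((2 * k + 1 : ℤ) : ℝ) := by push_cast; linarith
        exact_mod_cast this
      omega
  have hΛeq : ∀ l : ℝ, ∀ m ∈ Set.Ioo (-1 : ℝ) 1, Λ l m = l + Real.pi * k := by
    intro l m hm
    have h := hconst (l, m) hm
    have hπ := Real.pi_ne_zero
    simp only [hfdef] at h; rw [div_eq_iff hπ] at h
    linarith
  have hcos : ∀ l : ℝ, ∀ m ∈ Set.Ioo (-1 : ℝ) 1,
      Real.cos (Λ l m - l) = (-1 : ℝ) ^ k := by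
    intro l m hm
    rw [hΛeq l m hm]
    have : l + Real.pi * k - l = (k : ℝ) * Real.pi := by ring
    rw [this]
    have hc := Real.cos_add_int_mul_pi 0 k
    simpa using hc
  refine ⟨k, hΛeq, fun m hm => ?_⟩
  have h3 := heq3 0 m hm
  rw [hcos 0 m hm] at h3
  set ε : ℝ := (-1 : ℝ) ^ k with hε
  have hεsq : ε * ε = 1 := by
    rw [hε, ← zpow_add₀ (by norm_num : (-1 : ℝ) ≠ 0)]
    have : k + k = 2 * k := by ring
    rw [this, zpow_mul]
    norm_num
  have hεabs : |ε| = 1 := by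
    rcases mul_self_eq_one_iff.1 hεsq with h | h <;> rw [h] <;> norm_num
  have hbmem : ε * M m ∈ Set.Ioo (-1 : ℝ) 1 := by
    have : |ε * M m| < 1 := by rw [abs_mul, hεabs, one_mul]; exact hMlt m hm
    exact abs_lt.1 this |> fun h => ⟨h.1, h.2⟩
  have hBsq : (ε * M m) ^ 2 = M m ^ 2 := by
    have : (ε * M m) ^ 2 = (ε * ε) * M m ^ 2 := by ring
    rw [this, hεsq, one_mul]
  have heqr : m / Real.sqrt (1 - m ^ 2)
      = (ε * M m) / Real.sqrt (1 - (ε * M m) ^ 2) := by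
    rw [hBsq, h3, mul_div_assoc]
  have hmb : m = ε * M m := ratio_inj18 hm hbmem heqr
  linear_combination -ε * hmb - M m * hεsq
end
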